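/- Let (X, G) be a dynamical system, let k ≥ 2, and let (x_1, …, x_k) be a tuple in X^k \ Δ_k(X). Then (x_1, …, x_k) is a sequence entropy tuple if and only if it is an IN-tuple. -/

import Mathlib

open Filter Set

/-- `J ⊆ G` is an independence set for the tuple `A = (A 0, …, A (k-1))` of subsets
of `X`. -/
def IsIndepSetG {G : Type*} [Monoid G] {X : Type*} [MulAction G X]
    {k : ℕ} (A : Fin k → Set X) (J : Set G) : Prop :=
  ∀ I : Finset G, I.Nonempty → ↑I ⊆ J → ∀ σ : G → Fin k,
    (⋂ s ∈ I, (fun x : X => s • x) ⁻¹' A (σ s)).Nonempty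

/-- `x` is an IN-tuple: every product neighbourhood of `x` has arbitrarily large finite
independence sets. -/
def IsINTuple (G : Type*) [Monoid G] {X : Type*} [TopologicalSpace X] [MulAction G X]
    {k : ℕ} (x : Fin k → X) : Prop :=
  ∀ U : Fin k → Set X, (∀ i, IsOpen (U i)) → (∀ i, x i ∈ U i) →
    ∀ n : ℕ, ∃ I : Finset G, n ≤ I.card ∧ IsIndepSetG U (↑I : Set G)

/-- `x` is an IT-tuple: every product neighbourhood of `x` has an infinite independence
set. -/
def IsITTuple (G : Type*) [Monoid G] {X : Type*} [TopologicalSpace X] [MulAction G X]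
    {k : ℕ} (x : Fin k → X) : Prop :=
  ∀ U : Fin k → Set X, (∀ i, IsOpen (U i)) → (∀ i, x i ∈ U i) →
    ∃ J : Set G, J.Infinite ∧ IsIndepSetG U J

/-- `seqCovNum U s n` is `N(⋁_{i=1}^{n} s_i⁻¹ 𝒰)`, the minimal cardinality of a
subcover, for the cover `𝒰 = {(U 0)ᶜ, …, (U (l-1))ᶜ}` of `X` and the sequence `s`
in `G`. -/
noncomputable def seqCovNum {G : Type*} [Monoid G] {X : Type*} [MulAction G X]
    {l : ℕ} (U : Fin l → Set X) (s : ℕ → G) (n : ℕ) : ℕ :=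
  sInf {m : ℕ | ∃ F : Finset (Fin n → Fin l), F.card = m ∧
    (⋃ σ ∈ F, ⋂ i : Fin n, (fun x : X => s i • x) ⁻¹' (U (σ i))ᶜ) = Set.univ}

/-- `x` is a sequence entropy tuple: whenever `U_1, …, U_l` are closed pairwise disjoint
neighbourhoods of the distinct points in the list `x_1, …, x_k`, there is a sequence `𝔰`
in `G` with `h_top(X, {U_1ᶜ, …, U_lᶜ}; 𝔰) = limsup_n (1/n) log N(⋁_{i=1}^n s_i⁻¹𝒰) > 0`. -/
def IsSeqEntropyTuple (G : Type*) [Monoid G] {X : Type*} [TopologicalSpace X]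
    [MulAction G X] {k : ℕ} (x : Fin k → X) : Prop :=
  ∀ (l : ℕ) (z : Fin l → X) (U : Fin l → Set X),
    Function.Injective z → Set.range z = Set.range x →
    (∀ i, IsClosed (U i)) → (∀ i, z i ∈ interior (U i)) →
    (∀ i j, i ≠ j → Disjoint (U i) (U j)) →
    ∃ s : ℕ → G,
      0 < Filter.limsup (fun n : ℕ => Real.log (seqCovNum U s n : ℝ) / n) atTop

namespace KLaux

noncomputable section
open Classical

def BB (l m : ℕ) : ℕ → ℕ
  | 0 => 1
  | e+1 => 1 + (m * (e+2)^m) * BB l m (e - e / l^(m-1))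
decreasing_by exact Nat.lt_succ_of_le (Nat.sub_le _ _)

lemma BB_pos (l m e : ℕ) : 1 ≤ BB l m e := by
  cases e with
  | zero => simp [BB]
  | succ e => rw [BB]; omega

def Shat {l : ℕ} (S : Finset (ℕ → Option (Fin l))) (H : Finset ℕ) : Prop :=
  ∀ f : ℕ → Fin l, ∃ θ ∈ S, ∀ i ∈ H, θ i = some (f i)

lemma Shat.mono {l : ℕ} {S S' : Finset (ℕ → Option (Fin l))} (hSS : S ⊆ S') {H : Finset ℕ}
    (h : Shat S H) : Shat S' H := by
  intro f
  obtain ⟨θ, hθ, hh⟩ := h f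
  exact ⟨θ, hSS hθ, hh⟩

def shfam {l : ℕ} (E : Finset ℕ) (S : Finset (ℕ → Option (Fin l))) : Finset (Finset ℕ) :=
  E.powerset.filter (fun H => H.Nonempty ∧ Shat S H)

lemma shfam_card_le {l m : ℕ} (E : Finset ℕ) (S : Finset (ℕ → Option (Fin l)))
    (hdim : ∀ H ⊆ E, Shat S H → H.card < m) :
    (shfam E S).card ≤ m * (E.card + 1)^m := by
  have hsub : shfam E S ⊆ (Finset.range m).biUnion (fun j => E.powersetCard j) := by
    intro H hH
    rw [shfam, Finset.mem_filter, Finset.mem_powerset] at hH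
    obtain ⟨hHE, _, hsh⟩ := hH
    refine Finset.mem_biUnion.mpr ⟨H.card, Finset.mem_range.mpr (hdim H hHE hsh), ?_⟩
    exact Finset.mem_powersetCard.mpr ⟨hHE, rfl⟩
  calc (shfam E S).card ≤ ((Finset.range m).biUnion (fun j => E.powersetCard j)).card :=
        Finset.card_le_card hsub
    _ ≤ ∑ j ∈ Finset.range m, (E.powersetCard j).card := Finset.card_biUnion_le
    _ ≤ ∑ _j ∈ Finset.range m, (E.card + 1)^m := by
        refine Finset.sum_le_sum fun j hj => ?_
        rw [Finset.card_powersetCard]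
        calc E.card.choose j ≤ E.card ^ j := Nat.choose_le_pow _ _
          _ ≤ (E.card + 1)^j := Nat.pow_le_pow_left (by omega) _
          _ ≤ (E.card + 1)^m := Nat.pow_le_pow_right (by omega) (le_of_lt (Finset.mem_range.mp hj))
    _ = m * (E.card + 1)^m := by rw [Finset.sum_const, Finset.card_range, smul_eq_mul]

lemma sub_div_mono (L : ℕ) : Monotone (fun a => a - a / L) := by
  apply monotone_nat_of_le_succ
  intro a
  rcases Nat.eq_zero_or_pos L with hL | hL
  · simp [hL]
  · have h1 : (a+1)/L ≤ a/L + 1 := by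
      calc (a+1)/L ≤ (a+L)/L := Nat.div_le_div_right (by omega)
        _ = a/L + 1 := Nat.add_div_right _ hL
    have h2 : a/L ≤ a := Nat.div_le_self _ _
    omega

/-- A cover of size 1 when no nonempty subset of `E` is shattered. -/
lemma cover_of_no_shat {l : ℕ} (hl : 2 ≤ l) (E : Finset ℕ) (S : Finset (ℕ → Option (Fin l)))
    (hfe : shfam E S = ∅) :
    ∃ F : Finset (ℕ → Fin l),
      (∀ θ ∈ S, ∃ τ ∈ F, ∀ i ∈ E, θ i ≠ some (τ i)) ∧ F.card ≤ 1 := by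
  have hvals : ∀ i ∈ E, ∃ w : Fin l, ∀ θ ∈ S, θ i ≠ some w := by
    intro i hi
    by_contra hcon
    push_neg at hcon
    have hsh : Shat S {i} := by
      intro f
      obtain ⟨θ, hθ, hv⟩ := hcon (f i)
      exact ⟨θ, hθ, by simpa using hv⟩
    have hmem : ({i} : Finset ℕ) ∈ shfam E S := by
      rw [shfam, Finset.mem_filter, Finset.mem_powerset]
      exact ⟨Finset.singleton_subset_iff.mpr hi, Finset.singleton_nonempty i, hsh⟩
    rw [hfe] at hmem
    exact absurd hmem (Finset.notMem_empty _)
  refine ⟨{fun i => if h : i ∈ E then (hvals i h).choose else ⟨0, by omega⟩}, ?_, le_rfl⟩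
  intro θ hθ
  refine ⟨_, Finset.mem_singleton_self _, fun i hi => ?_⟩
  rw [dif_pos hi]
  exact (hvals i hi).choose_spec θ hθ

/-- Core covering lemma: bounded shattering dimension gives a cover of quasi-polynomial size. -/
theorem comb_core (l m : ℕ) (hl : 2 ≤ l) :
    ∀ e : ℕ, ∀ (E : Finset ℕ) (S : Finset (ℕ → Option (Fin l))),
      E.card ≤ e → (∀ H ⊆ E, Shat S H → H.card < m) →
      ∃ F : Finset (ℕ → Fin l),
        (∀ θ ∈ S, ∃ τ ∈ F, ∀ i ∈ E, θ i ≠ some (τ i)) ∧ F.card ≤ BB l m e := by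
  intro e
  induction e using Nat.strong_induction_on with
  | _ e IHe =>
  intro E S₀ hE hdim₀
  set L : ℕ := l^(m-1) with hLdef
  have hLpos : 0 < L := Nat.pow_pos (by omega)
  set re : ℕ := (e-1) - (e-1)/L with hredef
  -- inner induction on the size of the shattered family
  have inner : ∀ c : ℕ, ∀ S : Finset (ℕ → Option (Fin l)),
      (∀ H ⊆ E, Shat S H → H.card < m) → (shfam E S).card ≤ c →
      ∃ F : Finset (ℕ → Fin l),
        (∀ θ ∈ S, ∃ τ ∈ F, ∀ i ∈ E, θ i ≠ some (τ i)) ∧ F.card ≤ 1 + c * BB l m re := by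
    intro c
    induction c with
    | zero =>
      intro S hdim hfam
      obtain ⟨F, hcov, hcard⟩ := cover_of_no_shat hl E S
        (Finset.card_eq_zero.mp (Nat.le_zero.mp hfam))
      exact ⟨F, hcov, by omega⟩
    | succ c ihc =>
      intro S hdim hfam
      by_cases hfe : shfam E S = ∅
      · obtain ⟨F, hcov, hcard⟩ := cover_of_no_shat hl E S hfe
        refine ⟨F, hcov, ?_⟩
        have := BB_pos l m re
        nlinarith [Nat.zero_le (c * BB l m re)]
      · -- pick a maximal shattered set
        obtain ⟨H₀, hH₀mem, hH₀max⟩ :=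
          Finset.exists_max_image (shfam E S) Finset.card (Finset.nonempty_of_ne_empty hfe)
        have hH₀' := hH₀mem
        rw [shfam, Finset.mem_filter, Finset.mem_powerset] at hH₀'
        obtain ⟨hH₀E, hH₀ne, hH₀sh⟩ := hH₀'
        have hd1 : 1 ≤ H₀.card := Finset.Nonempty.card_pos hH₀ne
        have hdm : H₀.card < m := hdim H₀ hH₀E hH₀sh
        have hE1 : 1 ≤ E.card := Finset.card_pos.mpr (hH₀ne.mono hH₀E)
        have he1 : 1 ≤ e := le_trans hE1 hE
        -- missing patterns for each extension coordinate
        have hmiss : ∀ i ∈ E \ H₀, ∃ f : ℕ → Fin l,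
            ∀ θ ∈ S, ∃ j ∈ insert i H₀, θ j ≠ some (f j) := by
          intro i hi
          have hiE : i ∈ E := (Finset.mem_sdiff.mp hi).1
          have hiH : i ∉ H₀ := (Finset.mem_sdiff.mp hi).2
          have hne : ¬ Shat S (insert i H₀) := by
            intro hsh
            have hmem : insert i H₀ ∈ shfam E S := by
              rw [shfam, Finset.mem_filter, Finset.mem_powerset]
              exact ⟨Finset.insert_subset hiE hH₀E, Finset.insert_nonempty _ _, hsh⟩
            have h1 := hH₀max _ hmem
            rw [Finset.card_insert_of_notMem hiH] at h1
            omega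
          rw [Shat] at hne
          push_neg at hne
          obtain ⟨f, hf⟩ := hne
          refine ⟨f, fun θ hθ => ?_⟩
          obtain ⟨j, hj, hjne⟩ := by
            have := hf θ hθ
            exact this
          exact ⟨j, hj, hjne⟩
        -- total function of missing patterns
        set ffT : ℕ → (ℕ → Fin l) :=
          fun i => if h : i ∈ E \ H₀ then (hmiss i h).choose else (fun _ => ⟨0, by omega⟩)
          with hffTdef
        have hffT : ∀ i ∈ E \ H₀, ∀ θ ∈ S, ∃ j ∈ insert i H₀, θ j ≠ some (ffT i j) := by
          intro i hi θ hθ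
          rw [hffTdef]
          simp only [dif_pos hi]
          exact (hmiss i hi).choose_spec θ hθ
        -- pigeonhole on the restriction of the missing pattern to H₀
        have hnefun : Nonempty (↥H₀ → Fin l) := ⟨fun _ => ⟨0, by omega⟩⟩
        set φ : ℕ → (↥H₀ → Fin l) := fun i => fun j => ffT i ↑j with hφdef
        set nn : ℕ := (E \ H₀).card / (Fintype.card (↥H₀ → Fin l)) with hnndef
        obtain ⟨gs, _, hEstar0⟩ :=
          Finset.exists_le_card_fiber_of_mul_le_card_of_maps_to
            (s := E \ H₀) (t := (Finset.univ : Finset (↥H₀ → Fin l))) (f := φ) (n := nn)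
            (fun a _ => Finset.mem_univ _) Finset.univ_nonempty
            (by rw [Finset.card_univ, hnndef]; exact Nat.mul_div_le _ _)
        set Estar : Finset ℕ := (E \ H₀).filter (fun i => φ i = gs) with hEstardef
        have hEstar : nn ≤ Estar.card := hEstar0
        have hEstarsub : Estar ⊆ E \ H₀ := Finset.filter_subset _ _
        -- the class of θ matching gs on H₀
        set SP : (ℕ → Option (Fin l)) → Prop :=
          fun θ => ∀ j, ∀ hj : j ∈ H₀, θ j = some (gs ⟨j, hj⟩) with hSPdef
        set Sstar : Finset (ℕ → Option (Fin l)) := S.filter SP with hSstardef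
        -- realizer of the gs pattern
        set gfun : ℕ → Fin l := fun j => if h : j ∈ H₀ then gs ⟨j, h⟩ else ⟨0, by omega⟩
          with hgfundef
        obtain ⟨θr, hθrS, hθr⟩ := hH₀sh gfun
        have hθrSP : SP θr := by
          intro j hj
          have := hθr j hj
          rw [hgfundef] at this
          simpa [dif_pos hj] using this
        -- avoidance on Estar within the class
        have havoid : ∀ θ ∈ Sstar, ∀ i ∈ Estar, θ i ≠ some (ffT i i) := by
          intro θ hθ i hi
          have hθS : θ ∈ S := Finset.mem_of_mem_filter _ hθ
          have hθSP : SP θ := (Finset.mem_filter.mp hθ).2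
          have hiE : i ∈ E \ H₀ := hEstarsub hi
          have hφi : φ i = gs := (Finset.mem_filter.mp hi).2
          obtain ⟨j, hj, hjne⟩ := hffT i hiE θ hθS
          rcases Finset.mem_insert.mp hj with hji | hjH
          · rw [hji] at hjne; exact hjne
          · exfalso
            apply hjne
            have h1 : θ j = some (gs ⟨j, hjH⟩) := hθSP j hjH
            have h2 : ffT i j = gs ⟨j, hjH⟩ := by
              rw [← hφi]
            rw [h1, h2]
        -- the reduced coordinate set
        set E' : Finset ℕ := E \ (H₀ ∪ Estar) with hE'def
        have hre_lt : re < e := by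
          rw [hredef]
          have := Nat.sub_le (e-1) ((e-1)/L)
          omega
        have hcardfun : Fintype.card (↥H₀ → Fin l) = l ^ H₀.card := by
          rw [Fintype.card_fun, Fintype.card_fin, Fintype.card_coe]
        have hE'card : E'.card ≤ re := by
          have hdisj : Disjoint H₀ Estar := by
            refine Finset.disjoint_left.mpr fun a ha ha' => ?_
            exact (Finset.mem_sdiff.mp (hEstarsub ha')).2 ha
          have hUsub : H₀ ∪ Estar ⊆ E :=
            Finset.union_subset hH₀E (hEstarsub.trans (Finset.sdiff_subset))
          have h1 : E'.card = E.card - (H₀.card + Estar.card) := by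
            rw [hE'def, Finset.card_sdiff_of_subset hUsub, Finset.card_union_of_disjoint hdisj]
          have h2 : (E \ H₀).card = E.card - H₀.card := Finset.card_sdiff_of_subset hH₀E
          -- nn ≥ (E.card - H₀.card) / L
          have h3 : (E.card - H₀.card) / L ≤ nn := by
            rw [hnndef, h2, hcardfun]
            apply Nat.div_le_div_left _ (Nat.pow_pos (by omega))
            exact Nat.pow_le_pow_right (by omega) (by omega)
          have h4 : (E.card - H₀.card) - (E.card - H₀.card)/L ≤ (e-1) - (e-1)/L :=
            sub_div_mono L (by omega)
          have h5 : (E.card - H₀.card)/L ≤ nn := h3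
          rw [h1, hredef]
          have h6 : nn ≤ Estar.card := hEstar
          have h7 : E.card - (H₀.card + Estar.card) ≤
              (E.card - H₀.card) - (E.card - H₀.card)/L := by omega
          omega
        have hdim' : ∀ H ⊆ E', Shat Sstar H → H.card < m := by
          intro H hH hsh
          exact hdim H (hH.trans (Finset.sdiff_subset)) (hsh.mono (Finset.filter_subset _ _))
        obtain ⟨F₂, hF₂cov, hF₂card⟩ := IHe re hre_lt E' Sstar hE'card hdim'
        -- the rest
        set S' : Finset (ℕ → Option (Fin l)) := S.filter (fun θ => ¬ SP θ) with hS'def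
        have hdimS' : ∀ H ⊆ E, Shat S' H → H.card < m := by
          intro H hH hsh
          exact hdim H hH (hsh.mono (Finset.filter_subset _ _))
        have hfamS' : (shfam E S').card ≤ c := by
          have hsub : shfam E S' ⊆ (shfam E S).erase H₀ := by
            intro H hH
            have hH2 := hH
            rw [shfam, Finset.mem_filter, Finset.mem_powerset] at hH2
            obtain ⟨hHE, hHne, hHsh⟩ := hH2
            refine Finset.mem_erase.mpr ⟨?_, ?_⟩
            · intro heq
              subst heq
              obtain ⟨θ, hθ, hθmatch⟩ := hHsh gfun
              have hθSP : SP θ := by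
                intro j hj
                have := hθmatch j hj
                rw [hgfundef] at this
                simpa [dif_pos hj] using this
              have : ¬ SP θ := (Finset.mem_filter.mp hθ).2
              exact this hθSP
            · rw [shfam, Finset.mem_filter, Finset.mem_powerset]
              exact ⟨hHE, hHne, hHsh.mono (Finset.filter_subset _ _)⟩
          have h1 : (shfam E S').card ≤ ((shfam E S).erase H₀).card := Finset.card_le_card hsub
          rw [Finset.card_erase_of_mem hH₀mem] at h1
          have h2 : 1 ≤ (shfam E S).card := Finset.card_pos.mpr ⟨H₀, hH₀mem⟩
          omega
        obtain ⟨F₁, hF₁cov, hF₁card⟩ := ihc S' hdimS' hfamS'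
        -- avoid function
        have havd : ∀ a : Fin l, (if (a : ℕ) = 0 then (⟨1, by omega⟩ : Fin l) else ⟨0, by omega⟩) ≠ a := by
          intro a hc
          by_cases h : (a : ℕ) = 0
          · rw [if_pos h] at hc
            have h2 := congrArg Fin.val hc
            simp at h2
            omega
          · rw [if_neg h] at hc
            have h2 := congrArg Fin.val hc
            simp at h2
            omega
        set pav : (ℕ → Fin l) → (ℕ → Fin l) := fun τ i =>
          if h : i ∈ H₀ then (if ((gs ⟨i, h⟩ : Fin l) : ℕ) = 0 then ⟨1, by omega⟩ else ⟨0, by omega⟩)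
          else if i ∈ Estar then ffT i i else τ i with hpavdef
        refine ⟨F₁ ∪ F₂.image pav, ?_, ?_⟩
        · intro θ hθS
          by_cases hsp : SP θ
          · have hθstar : θ ∈ Sstar := Finset.mem_filter.mpr ⟨hθS, hsp⟩
            obtain ⟨τ, hτ, hτcov⟩ := hF₂cov θ hθstar
            refine ⟨pav τ, Finset.mem_union_right _ (Finset.mem_image_of_mem _ hτ), ?_⟩
            intro i hiE
            by_cases h₀ : i ∈ H₀
            · rw [hpavdef]
              simp only [dif_pos h₀]
              have h1 : θ i = some (gs ⟨i, h₀⟩) := hsp i h₀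
              rw [h1]
              intro hc
              exact havd (gs ⟨i, h₀⟩) (Option.some_injective _ hc).symm
            · by_cases hst : i ∈ Estar
              · rw [hpavdef]
                simp only [dif_neg h₀, if_pos hst]
                exact havoid θ hθstar i hst
              · have hiE' : i ∈ E' := by
                  rw [hE'def, Finset.mem_sdiff, Finset.mem_union]
                  exact ⟨hiE, by tauto⟩
                have := hτcov i hiE'
                rw [hpavdef]
                simpa only [dif_neg h₀, if_neg hst] using this
          · have hθ' : θ ∈ S' := Finset.mem_filter.mpr ⟨hθS, hsp⟩
            obtain ⟨τ, hτ, hτcov⟩ := hF₁cov θ hθ'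
            exact ⟨τ, Finset.mem_union_left _ hτ, hτcov⟩
        · calc (F₁ ∪ F₂.image pav).card ≤ F₁.card + (F₂.image pav).card :=
              Finset.card_union_le _ _
            _ ≤ (1 + c * BB l m re) + BB l m re := by
                have := Finset.card_image_le (f := pav) (s := F₂)
                omega
            _ = 1 + (c+1) * BB l m re := by ring
  -- conclude
  rcases Nat.eq_zero_or_pos e with he0 | he1
  · subst he0
    have hE0 : E = ∅ := Finset.card_eq_zero.mp (Nat.le_zero.mp hE)
    have hfe : shfam E S₀ = ∅ := by
      rw [hE0]
      apply Finset.eq_empty_of_forall_notMem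
      intro H hH
      rw [shfam, Finset.mem_filter, Finset.mem_powerset] at hH
      obtain ⟨h1, h2, _⟩ := hH
      rw [Finset.subset_empty.mp h1] at h2
      exact Finset.not_nonempty_empty h2
    obtain ⟨F, hcov, hcard⟩ := cover_of_no_shat hl E S₀ hfe
    exact ⟨F, hcov, by rw [BB]; omega⟩
  · obtain ⟨e', rfl⟩ : ∃ e', e = e' + 1 := ⟨e - 1, by omega⟩
    obtain ⟨F, hcov, hcard⟩ := inner (m * (e' + 1 + 1)^m) S₀ hdim₀
      (le_trans (shfam_card_le E S₀ hdim₀)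
        (by
          have h1 : E.card + 1 ≤ e' + 2 := by omega
          exact Nat.mul_le_mul_left m (Nat.pow_le_pow_left h1 m)))
    refine ⟨F, hcov, ?_⟩
    rw [BB]
    have hre_eq : re = e' - e'/L := by
      rw [hredef]
      simp
    rw [hre_eq] at hcard
    exact hcard


/-- `BB` grows subexponentially. -/
lemma BB_le_exp (l m : ℕ) (hl : 2 ≤ l) {A : ℝ} (hA : 1 < A) :
    ∃ C : ℝ, 1 ≤ C ∧ ∀ e : ℕ, (BB l m e : ℝ) ≤ C * A ^ e := by
  set L : ℕ := l^(m-1) with hLdef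
  have hLpos : 0 < L := Nat.pow_pos (by omega)
  set K : ℝ := 1 + m * ((L:ℝ)+1)^m with hKdef
  have hKpos : 0 < K := by positivity
  have hA0 : (0:ℝ) < A := by linarith
  have htends : Tendsto (fun t : ℕ => (A * K) * (((t : ℝ)+1)^m / A^(t+1))) atTop (nhds 0) := by
    have h1 : Tendsto (fun t : ℕ => ((t : ℝ))^m / A^t) atTop (nhds 0) :=
      tendsto_pow_const_div_const_pow_of_one_lt m hA
    have h2 : Tendsto (fun t : ℕ => (((t+1 : ℕ) : ℝ))^m / A^(t+1)) atTop (nhds 0) :=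
      h1.comp (tendsto_add_atTop_nat 1)
    have h3 : Tendsto (fun t : ℕ => (((t : ℝ)+1))^m / A^(t+1)) atTop (nhds 0) := by
      convert h2 using 2 with t
      push_cast
      ring_nf
    simpa using h3.const_mul (A * K)
  have hev : ∀ᶠ t : ℕ in atTop, K * ((t : ℝ)+1)^m ≤ A^t := by
    have := htends.eventually (gt_mem_nhds (show (0:ℝ) < 1 by norm_num))
    filter_upwards [this] with t ht
    have hApos : (0:ℝ) < A ^ (t+1) := by positivity
    have h4 : (A*K) * (((t:ℝ)+1)^m / A^(t+1)) < 1 := ht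
    rw [mul_div_assoc'] at h4
    rw [div_lt_one hApos] at h4
    have h5 : A^(t+1) = A * A^t := by ring
    nlinarith [pow_pos hA0 t]
  obtain ⟨t₀, ht₀⟩ := hev.exists_forall_of_atTop
  set n₀ : ℕ := L * (t₀ + 1) + 1 with hn₀def
  have hkey : ∀ e : ℕ, n₀ ≤ e → (1 + (m:ℝ) * ((e:ℝ)+1)^m) ≤ A ^ (1 + (e-1)/L) := by
    intro e he
    set t : ℕ := (e-1)/L with htdef
    have ht1 : t₀ ≤ t := by
      rw [htdef]
      calc t₀ ≤ (L * (t₀+1))/L := by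
            rw [Nat.mul_div_cancel_left _ hLpos]; omega
        _ ≤ (e-1)/L := Nat.div_le_div_right (by omega)
    have h5 : e - 1 < (t+1) * L := (Nat.div_lt_iff_lt_mul hLpos).mp (Nat.lt_succ_self t)
    have he1 : e + 1 ≤ (t+1) * (L+1) := by
      have h6 : (t+1) * (L+1) = (t+1)*L + (t+1) := by ring
      omega
    have he1' : (e : ℝ) + 1 ≤ ((L:ℝ)+1) * ((t:ℝ) + 1) := by
      have := (Nat.cast_le (α := ℝ)).mpr he1
      push_cast at this
      linarith
    have hbound : (1 + (m:ℝ) * ((e:ℝ)+1)^m) ≤ K * ((t:ℝ)+1)^m := by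
      have h8 : ((e:ℝ)+1)^m ≤ (((L:ℝ)+1) * ((t:ℝ)+1))^m :=
        pow_le_pow_left₀ (by positivity) he1' m
      have h9 : (((L:ℝ)+1) * ((t:ℝ)+1))^m = ((L:ℝ)+1)^m * ((t:ℝ)+1)^m := mul_pow _ _ _
      have h10 : (1:ℝ) ≤ ((t:ℝ)+1)^m := one_le_pow₀ (by push_cast; linarith)
      rw [hKdef]
      nlinarith [Nat.cast_nonneg (α := ℝ) m]
    calc (1 + (m:ℝ) * ((e:ℝ)+1)^m) ≤ K * ((t:ℝ)+1)^m := hbound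
      _ ≤ A ^ t := ht₀ t ht1
      _ ≤ A ^ (1 + (e-1)/L) := by
          apply pow_le_pow_right₀ (le_of_lt hA)
          omega
  -- Now the main induction
  set Cn : ℕ := (Finset.range n₀).sup (BB l m) with hCndef
  refine ⟨(Cn : ℝ) + 1, by
    have : (0:ℝ) ≤ (Cn:ℝ) := Nat.cast_nonneg _
    linarith, ?_⟩
  intro e
  induction e using Nat.strong_induction_on with
  | _ e IH =>
  have hCpos : (1:ℝ) ≤ (Cn:ℝ) + 1 := by
    have : (0:ℝ) ≤ (Cn:ℝ) := Nat.cast_nonneg _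
    linarith
  have hApow : (1:ℝ) ≤ A ^ e := one_le_pow₀ (le_of_lt hA)
  by_cases he : e < n₀
  · have h1 : BB l m e ≤ Cn := Finset.le_sup (Finset.mem_range.mpr he)
    have h2 : (BB l m e : ℝ) ≤ (Cn : ℝ) := Nat.cast_le.mpr h1
    nlinarith
  · push_neg at he
    have he1 : 1 ≤ e := by omega
    obtain ⟨e', rfl⟩ : ∃ e', e = e' + 1 := ⟨e - 1, by omega⟩
    set rr : ℕ := e' - e'/L with hrrdef
    have hrrlt : rr < e' + 1 := by
      have := Nat.sub_le e' (e'/L)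
      omega
    have hIH := IH rr hrrlt
    have hBBeq : BB l m (e'+1) = 1 + (m * (e'+2)^m) * BB l m rr := by
      rw [BB]
    have hexp : rr + (1 + ((e'+1)-1)/L) = e' + 1 := by
      rw [hrrdef]
      have h1 : e'/L ≤ e' := Nat.div_le_self _ _
      simp only [Nat.add_sub_cancel]
      omega
    have hkey' := hkey (e'+1) he
    have hrrpow : (1:ℝ) ≤ A ^ rr := one_le_pow₀ (le_of_lt hA)
    set Q : ℝ := ((m * (e'+2)^m : ℕ) : ℝ) with hQdef
    have hQ0 : (0:ℝ) ≤ Q := Nat.cast_nonneg _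
    have hBBrr : (BB l m rr : ℝ) ≤ ((Cn:ℝ)+1) * A ^ rr := hIH
    have hBBcast : (BB l m (e'+1) : ℝ) = 1 + Q * (BB l m rr : ℝ) := by
      rw [hBBeq, hQdef]
      push_cast
      ring
    have step1 : (BB l m (e'+1) : ℝ) ≤ 1 + Q * (((Cn:ℝ)+1) * A^rr) := by
      rw [hBBcast]
      have := mul_le_mul_of_nonneg_left hBBrr hQ0
      linarith
    have hC1 : (1:ℝ) ≤ ((Cn:ℝ)+1) * A^rr := by nlinarith
    have step2 : (1:ℝ) + Q * (((Cn:ℝ)+1) * A^rr)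
        ≤ (((Cn:ℝ)+1) * A^rr) * (1 + Q) := by nlinarith
    have step3 : (1:ℝ) + Q ≤ A ^ (1 + ((e'+1)-1)/L) := by
      have hQeq : Q = (m:ℝ) * ((e':ℝ)+2)^m := by rw [hQdef]; push_cast; ring
      have hk2 : (1:ℝ) + (m:ℝ) * ((e':ℝ)+2)^m ≤ A ^ (1 + ((e'+1)-1)/L) := by
        have := hkey'
        push_cast at this
        convert this using 3
        push_cast
        ring
        simp
      rw [hQeq]
      exact hk2
    calc (BB l m (e'+1) : ℝ) ≤ 1 + Q * (((Cn:ℝ)+1) * A^rr) := step1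
      _ ≤ (((Cn:ℝ)+1) * A^rr) * (1 + Q) := step2
      _ ≤ (((Cn:ℝ)+1) * A^rr) * A ^ (1 + ((e'+1)-1)/L) := by
          apply mul_le_mul_of_nonneg_left step3
          positivity
      _ = ((Cn:ℝ)+1) * A ^ (e'+1) := by
          rw [mul_assoc, ← pow_add, hexp]


/-- Direction 1: IN tuple implies sequence entropy tuple. -/
theorem in_to_se {G : Type*} [Monoid G] {X : Type*} [TopologicalSpace X]
    [MulAction G X]
    {k : ℕ} (x : Fin k → X) (hx : ∃ i j, x i ≠ x j) (hin : IsINTuple G x) :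
    IsSeqEntropyTuple G x := by
  intro l z U hzinj hrange hUclosed hUint hUdisj
  -- l ≥ 2
  have hl2 : 2 ≤ l := by
    obtain ⟨i, j, hij⟩ := hx
    have hi : x i ∈ Set.range z := hrange ▸ Set.mem_range_self i
    have hj : x j ∈ Set.range z := hrange ▸ Set.mem_range_self j
    obtain ⟨a, ha⟩ := hi
    obtain ⟨b, hb⟩ := hj
    have hab : a ≠ b := fun h => hij (by rw [← ha, ← hb, h])
    have h2 : (a : ℕ) < l := a.isLt
    have h3 : (b : ℕ) < l := b.isLt
    by_contra hcon
    push_neg at hcon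
    exact hab (Fin.ext (by omega))
  -- index maps
  have hxz : ∀ i : Fin k, ∃ j : Fin l, z j = x i := by
    intro i
    have : x i ∈ Set.range z := hrange ▸ Set.mem_range_self i
    exact this
  choose ι hι using hxz
  have hzx : ∀ j : Fin l, ∃ i : Fin k, x i = z j := by
    intro j
    have : z j ∈ Set.range x := hrange ▸ Set.mem_range_self j
    exact this
  choose ιinv hιinv using hzx
  have hii : ∀ j, ι (ιinv j) = j := by
    intro j
    apply hzinj
    rw [hι (ιinv j), hιinv j]
  -- neighborhoods of the x i
  set W : Fin k → Set X := fun i => interior (U (ι i)) with hWdef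
  have hWopen : ∀ i, IsOpen (W i) := fun i => isOpen_interior
  have hWmem : ∀ i, x i ∈ W i := fun i => (hι i) ▸ hUint (ι i)
  -- arbitrarily large independence sets, trimmed to size 2^p
  have hJ : ∀ p : ℕ, ∃ J : Finset G, J.card = 2^p ∧ IsIndepSetG W (↑J : Set G) := by
    intro p
    obtain ⟨J₀, hJ₀card, hJ₀ind⟩ := hin W hWopen hWmem (2^p)
    obtain ⟨J, hJsub, hJcard⟩ := J₀.exists_subset_card_eq hJ₀card
    refine ⟨J, hJcard, ?_⟩
    intro I hIne hIsub σ
    exact hJ₀ind I hIne (hIsub.trans (by exact_mod_cast hJsub)) σ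
  choose J hJcard hJind using hJ
  -- enumeration of each J p
  set em : ∀ p : ℕ, Fin (2^p) → G :=
    fun p t => ((J p).equivFin.symm (Fin.cast (hJcard p).symm t) : (J p)) with hemdef
  have hemmem : ∀ p t, em p t ∈ J p := fun p t => ((J p).equivFin.symm _).2
  have heminj : ∀ p, Function.Injective (em p) := by
    intro p a b h
    have h1 := (J p).equivFin.symm.injective (Subtype.coe_injective h)
    have h2 := congrArg Fin.val h1
    exact Fin.ext h2
  -- the sequence
  set s : ℕ → G := fun q =>
    if h : q = 0 then 1
    else em (Nat.log 2 q) ⟨q - 2^(Nat.log 2 q), by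
      have h1 : 2^(Nat.log 2 q) ≤ q := Nat.pow_log_le_self 2 h
      have h2 : q < 2^(Nat.log 2 q + 1) := Nat.lt_pow_succ_log_self (by omega) q
      have h3 : 2^(Nat.log 2 q + 1) = 2 * 2^(Nat.log 2 q) := by ring
      omega⟩ with hsdef
  have hs_block : ∀ p : ℕ, ∀ t : Fin (2^p), s (2^p + (t : ℕ)) = em p t := by
    intro p t
    have hq0 : 2^p + (t : ℕ) ≠ 0 := by positivity
    have hlog : Nat.log 2 (2^p + (t : ℕ)) = p := by
      apply Nat.log_eq_of_pow_le_of_lt_pow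
      · omega
      · have h1 : (t : ℕ) < 2^p := t.isLt
        have h2 : 2^(p+1) = 2 * 2^p := by ring
        omega
    have hcast : ∀ (a b : ℕ) (hab : a = b) (v : Fin (2^a)) (w : Fin (2^b)),
        (v:ℕ) = (w:ℕ) → em a v = em b w := by
      intro a b hab
      subst hab
      intro v w hvw
      exact congrArg (em a) (Fin.ext hvw)
    rw [hsdef]
    simp only [dif_neg hq0]
    refine hcast _ p hlog _ t ?_
    show (2^p + (t:ℕ)) - 2^(Nat.log 2 (2^p + (t:ℕ))) = (t:ℕ)
    rw [hlog]
    omega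
  set u : ℕ → ℝ := fun nn => Real.log (seqCovNum U s nn : ℝ) / nn with hudef
  have hj01 : (⟨0, by omega⟩ : Fin l) ≠ ⟨1, by omega⟩ := by
    intro hc
    have := congrArg Fin.val hc
    simp at this
  -- full covers: upper bound
  have hsetmem : ∀ nn : ℕ, (l ^ nn) ∈ {m : ℕ | ∃ F : Finset (Fin nn → Fin l), F.card = m ∧
      (⋃ σ ∈ F, ⋂ i : Fin nn, (fun y : X => s i • y) ⁻¹' (U (σ i))ᶜ) = Set.univ} := by
    intro nn
    refine ⟨Finset.univ, by rw [Finset.card_univ, Fintype.card_fun, Fintype.card_fin,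
      Fintype.card_fin], ?_⟩
    rw [Set.eq_univ_iff_forall]
    intro y
    have hchoice : ∀ i : Fin nn, ∃ j : Fin l, s i • y ∉ U j := by
      intro i
      by_contra hc
      push_neg at hc
      exact Set.disjoint_left.mp (hUdisj _ _ hj01) (hc ⟨0, by omega⟩) (hc ⟨1, by omega⟩)
    choose σf hσf using hchoice
    exact Set.mem_iUnion₂.mpr ⟨σf, Finset.mem_univ _, Set.mem_iInter.mpr hσf⟩
  have hub0 : ∀ nn : ℕ, seqCovNum U s nn ≤ l ^ nn := fun nn => Nat.sInf_le (hsetmem nn)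
  have hub : ∀ nn : ℕ, u nn ≤ Real.log l := by
    intro nn
    rcases Nat.eq_zero_or_pos nn with h0 | hposn
    · subst h0
      rw [hudef]
      simp only [Nat.cast_zero, div_zero]
      exact Real.log_nonneg (by exact_mod_cast (by omega : 1 ≤ l))
    · have hlog : Real.log (seqCovNum U s nn : ℝ) ≤ nn * Real.log l := by
        rcases Nat.eq_zero_or_pos (seqCovNum U s nn) with hz | hpos2
        · rw [hz]
          simp only [Nat.cast_zero, Real.log_zero]
          have : (0:ℝ) ≤ Real.log l := Real.log_nonneg (by exact_mod_cast (by omega : 1 ≤ l))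
          positivity
        · have hcast : (seqCovNum U s nn : ℝ) ≤ ((l:ℝ))^nn := by exact_mod_cast hub0 nn
          have hple : Real.log (seqCovNum U s nn : ℝ) ≤ Real.log ((l:ℝ)^nn) :=
            Real.log_le_log (by exact_mod_cast hpos2) hcast
          rw [Real.log_pow] at hple
          exact hple
      rw [hudef]
      rw [div_le_iff₀ (by exact_mod_cast hposn)]
      calc Real.log (seqCovNum U s nn : ℝ) ≤ nn * Real.log l := hlog
        _ = Real.log l * nn := by ring
  -- counting lower bound in the blocks
  have hppos : ∀ p : ℕ, (0:ℕ) < 2^p := fun p => Nat.pow_pos (by omega)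
  have hkey : ∀ p : ℕ, l^(2^p) ≤ seqCovNum U s (2^(p+1)) * (l-1)^(2^p) := by
    intro p
    set nb : ℕ := 2^(p+1) with hnbdef
    have hnb : nb = 2 * 2^p := by rw [hnbdef]; ring
    have hlt : ∀ t : Fin (2^p), 2^p + (t:ℕ) < nb := by
      intro t
      have := t.isLt
      omega
    set posF : Fin (2^p) → Fin nb := fun t => ⟨2^p + (t:ℕ), hlt t⟩ with hposFdef
    have hsetne : {m : ℕ | ∃ F : Finset (Fin nb → Fin l), F.card = m ∧
        (⋃ σ ∈ F, ⋂ i : Fin nb, (fun y : X => s i • y) ⁻¹' (U (σ i))ᶜ) = Set.univ}.Nonempty :=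
      ⟨l^nb, hsetmem nb⟩
    obtain ⟨F, hFcard, hFcov⟩ := Nat.sInf_mem hsetne
    -- realizers
    have hreal : ∀ gb : Fin (2^p) → Fin l, ∃ y : X,
        ∀ t : Fin (2^p), s (2^p + (t:ℕ)) • y ∈ U (gb t) := by
      intro gb
      set σG : G → Fin k := fun g =>
        if h : ∃ tt : Fin (2^p), em p tt = g then ιinv (gb h.choose)
        else ιinv (gb ⟨0, hppos p⟩) with hσGdef
      have hJne : (J p).Nonempty := Finset.card_pos.mp (by rw [hJcard p]; exact hppos p)
      obtain ⟨y, hy⟩ := hJind p (J p) hJne (by exact subset_rfl) σG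
      refine ⟨y, fun t => ?_⟩
      have hy' := Set.mem_iInter₂.mp hy (em p t) (hemmem p t)
      have hσ : σG (em p t) = ιinv (gb t) := by
        have hex : ∃ tt, em p tt = em p t := ⟨t, rfl⟩
        rw [hσGdef]
        simp only [dif_pos hex]
        congr 1
        exact congrArg gb (heminj p hex.choose_spec)
      rw [hs_block p t]
      have h2 : em p t • y ∈ W (ιinv (gb t)) := by rw [← hσ]; exact hy'
      have h3 : W (ιinv (gb t)) ⊆ U (gb t) := by
        rw [hWdef]
        simp only
        rw [hii]
        exact interior_subset
      exact h3 h2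
    choose xg hxg using hreal
    have hsubset : (Finset.univ : Finset (Fin (2^p) → Fin l)) ⊆
        F.biUnion (fun σ => Fintype.piFinset (fun t => Finset.univ.erase (σ (posF t)))) := by
      intro gb _
      have hxmem : xg gb ∈ (⋃ σ ∈ F, ⋂ i : Fin nb, (fun y : X => s i • y) ⁻¹' (U (σ i))ᶜ) := by
        rw [hFcov]; exact Set.mem_univ _
      obtain ⟨σF, hσF, hxin⟩ := Set.mem_iUnion₂.mp hxmem
      refine Finset.mem_biUnion.mpr ⟨σF, hσF, Fintype.mem_piFinset.mpr fun t => ?_⟩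
      refine Finset.mem_erase.mpr ⟨?_, Finset.mem_univ _⟩
      intro heq
      have h1 := Set.mem_iInter.mp hxin (posF t)
      have h2 : s ((posF t) : ℕ) • xg gb ∈ U (gb t) := hxg gb t
      rw [← heq] at h1
      exact h1 h2
    have hcount : l^(2^p) ≤ F.card * (l-1)^(2^p) := by
      have h1 : (Finset.univ : Finset (Fin (2^p) → Fin l)).card = l^(2^p) := by
        rw [Finset.card_univ, Fintype.card_fun, Fintype.card_fin, Fintype.card_fin]
      calc l^(2^p) = (Finset.univ : Finset (Fin (2^p) → Fin l)).card := h1.symm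
        _ ≤ (F.biUnion (fun σ => Fintype.piFinset
              (fun t => Finset.univ.erase (σ (posF t))))).card :=
            Finset.card_le_card hsubset
        _ ≤ ∑ σ ∈ F, (Fintype.piFinset
              (fun t => Finset.univ.erase (σ (posF t)))).card := Finset.card_biUnion_le
        _ ≤ ∑ _σ ∈ F, (l-1)^(2^p) := by
            refine Finset.sum_le_sum fun σ _ => ?_
            rw [Fintype.card_piFinset]
            have : ∀ t : Fin (2^p), (Finset.univ.erase (σ (posF t))).card = l - 1 := by
              intro t
              rw [Finset.card_erase_of_mem (Finset.mem_univ _), Finset.card_univ,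
                Fintype.card_fin]
            rw [Finset.prod_congr rfl (fun t _ => this t)]
            rw [Finset.prod_const, Finset.card_univ, Fintype.card_fin]
        _ = F.card * (l-1)^(2^p) := by rw [Finset.sum_const, smul_eq_mul]
    have hNF : seqCovNum U s nb = F.card := hFcard.symm
    rw [hNF]
    exact hcount
  -- the lower bound on u at block ends
  set lr : ℝ := (l : ℝ) with hlrdef
  have hl1r : (1:ℝ) ≤ lr - 1 := by
    rw [hlrdef]
    have : (2:ℝ) ≤ (l:ℝ) := by exact_mod_cast hl2
    linarith
  have hcastl1 : ((l-1 : ℕ) : ℝ) = lr - 1 := by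
    rw [hlrdef]
    have : 1 ≤ l := by omega
    push_cast [this]
    ring
  set δ : ℝ := (Real.log lr - Real.log (lr - 1))/2 with hδdef
  have hδpos : 0 < δ := by
    rw [hδdef]
    have h1 : Real.log (lr - 1) < Real.log lr := by
      apply Real.log_lt_log (by linarith)
      linarith
    linarith
  have hfreql : ∀ p : ℕ, δ ≤ u (2^(p+1)) := by
    intro p
    have hk := hkey p
    set N : ℕ := seqCovNum U s (2^(p+1)) with hNdef
    have hkr : lr^(2^p) ≤ (N:ℝ) * (lr-1)^(2^p) := by
      rw [hlrdef, ← hcastl1]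
      exact_mod_cast hk
    have hl1pow : (0:ℝ) < (lr-1)^(2^p) := by positivity
    have hNpos : (0:ℝ) < (N:ℝ) := by
      rcases Nat.eq_zero_or_pos N with h0 | hp
      · exfalso
        rw [h0] at hkr
        simp at hkr
        have : (0:ℝ) < lr^(2^p) := by
          have : (0:ℝ) < lr := by rw [hlrdef]; exact_mod_cast (by omega : 0 < l)
          positivity
        linarith
      · exact_mod_cast hp
    have hratio : lr^(2^p) / (lr-1)^(2^p) ≤ (N:ℝ) := by
      rw [div_le_iff₀ hl1pow]
      exact hkr
    have hlogN : (2^p : ℝ) * (Real.log lr - Real.log (lr-1)) ≤ Real.log N := by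
      have h1 : Real.log (lr^(2^p) / (lr-1)^(2^p)) ≤ Real.log N :=
        Real.log_le_log (by positivity) hratio
      rw [Real.log_div (by positivity) (by positivity), Real.log_pow, Real.log_pow] at h1
      push_cast at h1 ⊢
      linarith
    show δ ≤ Real.log (N : ℝ) / ((2^(p+1) : ℕ) : ℝ)
    have hnbr : ((2^(p+1) : ℕ) : ℝ) = 2 * (2^p : ℝ) := by
      push_cast
      ring
    rw [hnbr]
    rw [hδdef, le_div_iff₀ (by positivity)]
    have h2 : (0:ℝ) < (2^p : ℝ) := by positivity
    nlinarith [hlogN]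
  have hfreq : ∃ᶠ nn in atTop, δ ≤ u nn := by
    rw [Filter.frequently_atTop]
    intro N₀
    refine ⟨2^(N₀+1), ?_, hfreql N₀⟩
    have h1 : N₀ < 2^N₀ := Nat.lt_two_pow_self
    have h2 : (2:ℕ)^N₀ ≤ 2^(N₀+1) := Nat.pow_le_pow_right (by omega) (by omega)
    omega
  refine ⟨s, ?_⟩
  have hlim : δ ≤ limsup u atTop :=
    le_limsup_of_frequently_le hfreq (Filter.isBoundedUnder_of ⟨Real.log l, hub⟩)
  exact lt_of_lt_of_le hδpos hlim


/-- Direction 2: sequence entropy tuple implies IN tuple. -/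
theorem se_to_in {G : Type*} [Monoid G] {X : Type*} [TopologicalSpace X] [CompactSpace X]
    [T2Space X] [MulAction G X]
    {k : ℕ} (x : Fin k → X) (hx : ∃ i j, x i ≠ x j) (hse : IsSeqEntropyTuple G x) :
    IsINTuple G x := by
  intro U hUopen hxU n
  -- the distinct points of the tuple
  set T : Finset X := Finset.univ.image x with hTdef
  set l : ℕ := T.card with hldef
  set z : Fin l → X := fun j => ((T.equivFin.symm j : T) : X) with hzdef
  have hzmem : ∀ j, z j ∈ T := fun j => (T.equivFin.symm j).2
  have hzinj : Function.Injective z := fun a b h =>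
    T.equivFin.symm.injective (Subtype.coe_injective h)
  have hxT : ∀ i, x i ∈ T := fun i => Finset.mem_image_of_mem x (Finset.mem_univ i)
  set jdx : Fin k → Fin l := fun i => T.equivFin ⟨x i, hxT i⟩ with hjdxdef
  have hjdx : ∀ i, z (jdx i) = x i := by
    intro i
    show ((T.equivFin.symm (T.equivFin ⟨x i, hxT i⟩) : T) : X) = x i
    rw [Equiv.symm_apply_apply]
  have hrange : Set.range z = Set.range x := by
    apply Set.Subset.antisymm
    · rintro y ⟨j, rfl⟩
      have := hzmem j
      rw [hTdef, Finset.mem_image] at this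
      obtain ⟨i, _, hi⟩ := this
      exact ⟨i, hi⟩
    · rintro y ⟨i, rfl⟩
      exact ⟨jdx i, hjdx i⟩
  -- pairwise disjoint open sets around the z j
  have hsep : ∀ a b : Fin l, ∃ u v : Set X,
      IsOpen u ∧ IsOpen v ∧ z a ∈ u ∧ z b ∈ v ∧ (a ≠ b → Disjoint u v) := by
    intro a b
    by_cases h : a = b
    · exact ⟨univ, univ, isOpen_univ, isOpen_univ, mem_univ _, mem_univ _,
        fun hab => absurd h hab⟩
    · obtain ⟨u, v, hu, hv, hau, hbv, huv⟩ := t2_separation (fun hc => h (hzinj hc))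
      exact ⟨u, v, hu, hv, hau, hbv, fun _ => huv⟩
  choose W₁ W₂ hW₁o hW₂o hW₁m hW₂m hWd using hsep
  set V : Fin l → Set X := fun j => (⋂ b, W₁ j b) ∩ (⋂ a, W₂ a j) with hVdef
  have hVopen : ∀ j, IsOpen (V j) :=
    fun j => (isOpen_iInter_of_finite (fun b => hW₁o j b)).inter
      (isOpen_iInter_of_finite (fun a => hW₂o a j))
  have hVmem : ∀ j, z j ∈ V j := fun j =>
    ⟨Set.mem_iInter.mpr (fun b => hW₁m j b), Set.mem_iInter.mpr (fun a => hW₂m a j)⟩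
  have hVdisj : ∀ a b, a ≠ b → Disjoint (V a) (V b) := by
    intro a b hab
    have h1 : V a ⊆ W₁ a b := fun y hy => Set.mem_iInter.mp hy.1 b
    have h2 : V b ⊆ W₂ a b := fun y hy => Set.mem_iInter.mp hy.2 a
    exact (hWd a b hab).mono h1 h2
  -- shrink inside the U i
  set O : Fin l → Set X := fun j => V j ∩ ⋂ i : Fin k, (if x i = z j then U i else univ)
    with hOdef
  have hOopen : ∀ j, IsOpen (O j) := by
    intro j
    refine (hVopen j).inter (isOpen_iInter_of_finite fun i => ?_)
    split
    · exact hUopen i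
    · exact isOpen_univ
  have hOmem : ∀ j, z j ∈ O j := by
    intro j
    refine ⟨hVmem j, Set.mem_iInter.mpr fun i => ?_⟩
    split
    · next h => rw [← h]; exact hxU i
    · exact mem_univ _
  have hOsubU : ∀ j (i : Fin k), x i = z j → O j ⊆ U i := by
    intro j i h y hy
    have := Set.mem_iInter.mp hy.2 i
    rwa [if_pos h] at this
  have hreg : ∀ j : Fin l, ∃ Kj : Set X, Kj ∈ nhds (z j) ∧ IsClosed Kj ∧ Kj ⊆ O j := by
    intro j
    obtain ⟨t, ht1, ht2, ht3⟩ := exists_mem_nhds_isClosed_subset ((hOopen j).mem_nhds (hOmem j))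
    exact ⟨t, ht1, ht2, ht3⟩
  choose Kf hKnhds hKclosed hKsub using hreg
  have hKint : ∀ j, z j ∈ interior (Kf j) := fun j => mem_interior_iff_mem_nhds.mpr (hKnhds j)
  have hKdisj : ∀ a b, a ≠ b → Disjoint (Kf a) (Kf b) := by
    intro a b hab
    exact (hVdisj a b hab).mono ((hKsub a).trans Set.inter_subset_left)
      ((hKsub b).trans Set.inter_subset_left)
  have hKsubU : ∀ i : Fin k, Kf (jdx i) ⊆ U i :=
    fun i => (hKsub (jdx i)).trans (hOsubU (jdx i) i (hjdx i).symm)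
  -- apply the sequence entropy hypothesis
  obtain ⟨s, hpos⟩ := hse l z Kf hzinj hrange hKclosed hKint hKdisj
  set u : ℕ → ℝ := fun n => Real.log (seqCovNum Kf s n : ℝ) / n with hudef
  set mm : ℕ := max 1 n with hmmdef
  have hl2 : 2 ≤ l := by
    obtain ⟨i, j, hij⟩ := hx
    have h1 : jdx i ≠ jdx j := fun h => hij (by rw [← hjdx i, ← hjdx j, h])
    by_contra hcon
    push_neg at hcon
    have h2 : ((jdx i : Fin l) : ℕ) < l := (jdx i).isLt
    have h3 : ((jdx j : Fin l) : ℕ) < l := (jdx j).isLt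
    exact h1 (Fin.ext (by omega))
  have hj01 : (⟨0, by omega⟩ : Fin l) ≠ ⟨1, by omega⟩ := by
    intro hc
    have := congrArg Fin.val hc
    simp at this
  -- upper bound for the covering numbers
  have hsetmem : ∀ nn : ℕ, (l ^ nn) ∈ {m : ℕ | ∃ F : Finset (Fin nn → Fin l), F.card = m ∧
      (⋃ σ ∈ F, ⋂ i : Fin nn, (fun y : X => s i • y) ⁻¹' (Kf (σ i))ᶜ) = Set.univ} := by
    intro nn
    refine ⟨Finset.univ, by rw [Finset.card_univ, Fintype.card_fun, Fintype.card_fin,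
      Fintype.card_fin], ?_⟩
    rw [Set.eq_univ_iff_forall]
    intro y
    have hchoice : ∀ i : Fin nn, ∃ j : Fin l, s i • y ∉ Kf j := by
      intro i
      by_contra hc
      push_neg at hc
      exact Set.disjoint_left.mp (hKdisj _ _ hj01) (hc ⟨0, by omega⟩) (hc ⟨1, by omega⟩)
    choose σf hσf using hchoice
    exact Set.mem_iUnion₂.mpr ⟨σf, Finset.mem_univ _, Set.mem_iInter.mpr hσf⟩
  have hub0 : ∀ nn : ℕ, seqCovNum Kf s nn ≤ l ^ nn := fun nn => Nat.sInf_le (hsetmem nn)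
  have hub : ∀ nn : ℕ, u nn ≤ Real.log l := by
    intro nn
    rcases Nat.eq_zero_or_pos nn with h0 | hpos
    · subst h0
      rw [hudef]
      simp only [Nat.cast_zero, div_zero]
      exact Real.log_nonneg (by exact_mod_cast (by omega : 1 ≤ l))
    · have hlog : Real.log (seqCovNum Kf s nn : ℝ) ≤ nn * Real.log l := by
        rcases Nat.eq_zero_or_pos (seqCovNum Kf s nn) with hz | hpos2
        · rw [hz]
          simp only [Nat.cast_zero, Real.log_zero]
          have : (0:ℝ) ≤ Real.log l := Real.log_nonneg (by exact_mod_cast (by omega : 1 ≤ l))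
          positivity
        · have hcast : (seqCovNum Kf s nn : ℝ) ≤ ((l:ℝ))^nn := by exact_mod_cast hub0 nn
          have hple : Real.log (seqCovNum Kf s nn : ℝ) ≤ Real.log ((l:ℝ)^nn) :=
            Real.log_le_log (by exact_mod_cast hpos2) hcast
          rw [Real.log_pow] at hple
          exact hple
      rw [hudef]
      rw [div_le_iff₀ (by exact_mod_cast hpos)]
      calc Real.log (seqCovNum Kf s nn : ℝ) ≤ nn * Real.log l := hlog
        _ = Real.log l * nn := by ring
  have hlbu : ∀ nn : ℕ, 0 ≤ u nn := by
    intro nn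
    rw [hudef]
    apply div_nonneg _ (Nat.cast_nonneg _)
    rcases Nat.eq_zero_or_pos (seqCovNum Kf s nn) with hz | hpos2
    · rw [hz]; simp
    · exact Real.log_nonneg (by exact_mod_cast hpos2)
  have hbddu : IsBoundedUnder (· ≤ ·) atTop u := Filter.isBoundedUnder_of ⟨Real.log l, hub⟩
  have hcob : IsCoboundedUnder (· ≤ ·) atTop u :=
    IsBoundedUnder.isCoboundedUnder_le (Filter.isBoundedUnder_of ⟨(0:ℝ), hlbu⟩)
  set δ : ℝ := limsup u atTop / 2 with hδdef
  have hδ : 0 < δ := half_pos hpos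
  have hfreq : ∃ᶠ nn in atTop, δ < u nn :=
    frequently_lt_of_lt_limsup hcob (half_lt_self hpos)
  have hA : (1:ℝ) < Real.exp (δ/2) := by
    rw [Real.one_lt_exp_iff]
    positivity
  obtain ⟨C, hC1, hCb⟩ := BB_le_exp l mm hl2 hA
  have hevC : ∀ᶠ nn : ℕ in atTop, C * (Real.exp (δ/2))^nn ≤ Real.exp (δ * nn) := by
    have htend : Tendsto (fun nn : ℕ => Real.exp ((δ/2) * nn)) atTop atTop := by
      apply Real.tendsto_exp_atTop.comp
      exact Tendsto.const_mul_atTop (by positivity) tendsto_natCast_atTop_atTop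
    filter_upwards [htend.eventually_ge_atTop C] with nn hnn
    have h1 : (Real.exp (δ/2))^nn = Real.exp ((δ/2)*nn) := by
      rw [← Real.exp_nat_mul]
      ring_nf
    rw [h1]
    have h2 : Real.exp (δ * nn) = Real.exp ((δ/2)*nn) * Real.exp ((δ/2)*nn) := by
      rw [← Real.exp_add]
      ring_nf
    rw [h2]
    have h3 : (0:ℝ) < Real.exp ((δ/2)*nn) := Real.exp_pos _
    nlinarith
  obtain ⟨nn, hfreqn, hevn⟩ := (hfreq.and_eventually hevC).exists
  have hnnpos : 0 < nn := by
    rcases Nat.eq_zero_or_pos nn with h0 | h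
    · exfalso
      rw [h0, hudef] at hfreqn
      simp only [Nat.cast_zero, div_zero] at hfreqn
      linarith
    · exact h
  have hNgt : Real.exp (δ * nn) < (seqCovNum Kf s nn : ℝ) := by
    have h1 : δ * nn < Real.log (seqCovNum Kf s nn : ℝ) := by
      have h2 : δ < Real.log (seqCovNum Kf s nn : ℝ) / nn := hfreqn
      rw [lt_div_iff₀ (by exact_mod_cast hnnpos)] at h2
      linarith
    have hN1 : 1 ≤ seqCovNum Kf s nn := by
      by_contra hcc
      push_neg at hcc
      have h0 : seqCovNum Kf s nn = 0 := by omega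
      rw [h0] at h1
      simp only [Nat.cast_zero, Real.log_zero] at h1
      have h6 : (0:ℝ) < (nn:ℝ) := by exact_mod_cast hnnpos
      nlinarith
    calc Real.exp (δ * nn) < Real.exp (Real.log (seqCovNum Kf s nn : ℝ)) :=
        Real.exp_lt_exp.mpr h1
      _ = (seqCovNum Kf s nn : ℝ) := Real.exp_log (by exact_mod_cast hN1)
  -- the pattern map
  set pat : X → (ℕ → Option (Fin l)) := fun y i =>
    if h : ∃ j : Fin l, i < nn ∧ s i • y ∈ Kf j then some h.choose else none with hpatdef
  have hpat1 : ∀ y i (j : Fin l), i < nn → s i • y ∈ Kf j → pat y i = some j := by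
    intro y i j hi hm
    have hex : ∃ j' : Fin l, i < nn ∧ s i • y ∈ Kf j' := ⟨j, hi, hm⟩
    show (if h : ∃ j' : Fin l, i < nn ∧ s i • y ∈ Kf j' then some h.choose else none) = some j
    rw [dif_pos hex]
    congr 1
    by_contra hne
    exact Set.disjoint_left.mp (hKdisj _ _ hne) hex.choose_spec.2 hm
  have hpat2 : ∀ y i (j : Fin l), pat y i = some j → i < nn ∧ s i • y ∈ Kf j := by
    intro y i j h
    have h' : (if hh : ∃ j' : Fin l, i < nn ∧ s i • y ∈ Kf j' then some hh.choose
        else none) = some j := h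
    by_cases hex : ∃ j' : Fin l, i < nn ∧ s i • y ∈ Kf j'
    · rw [dif_pos hex] at h'
      have := Option.some.inj h'
      rw [← this]
      exact hex.choose_spec
    · rw [dif_neg hex] at h'
      exact absurd h' (by simp)
  have hfin : (Set.range pat).Finite := by
    have hinj : Set.InjOn (fun θ : ℕ → Option (Fin l) => (fun i : Fin nn => θ ↑i))
        (Set.range pat) := by
      rintro θ ⟨y, rfl⟩ θ' ⟨y', rfl⟩ hh
      funext i
      by_cases hi : i < nn
      · exact congrFun hh ⟨i, hi⟩
      · have e1 : pat y i = none := by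
          show (if h : ∃ j : Fin l, i < nn ∧ s i • y ∈ Kf j then some h.choose else none) = none
          apply dif_neg
          rintro ⟨j, hj, -⟩
          omega
        have e2 : pat y' i = none := by
          show (if h : ∃ j : Fin l, i < nn ∧ s i • y' ∈ Kf j then some h.choose else none) = none
          apply dif_neg
          rintro ⟨j, hj, -⟩
          omega
        rw [e1, e2]
    exact Set.Finite.of_finite_image (Set.toFinite _) hinj
  set S : Finset (ℕ → Option (Fin l)) := hfin.toFinset with hSdef
  rcases Classical.em (∃ H : Finset ℕ, H ⊆ Finset.range nn ∧ Shat S H ∧ mm ≤ H.card) with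
    ⟨H, hHsub, hHsh, hHcard⟩ | hno
  · -- extract the independence set
    have hsinj : Set.InjOn (fun i => s i) ↑H := by
      intro i hi i' hi' heq
      by_contra hne
      have hne' : ¬ i' = i := fun hc => hne hc.symm
      obtain ⟨θ, hθS, hθ⟩ := hHsh (fun j => if j = i then ⟨0, by omega⟩ else ⟨1, by omega⟩)
      obtain ⟨y, rfl⟩ := (Set.Finite.mem_toFinset hfin).mp hθS
      have h1 := hpat2 y i _ (hθ i (Finset.mem_coe.mp hi))
      have h2 := hpat2 y i' _ (hθ i' (Finset.mem_coe.mp hi'))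
      rw [if_pos rfl] at h1
      rw [if_neg hne'] at h2
      have heq' : s i = s i' := heq
      rw [heq'] at h1
      exact Set.disjoint_left.mp (hKdisj _ _ hj01) h1.2 h2.2
    refine ⟨H.image (fun i => s i), ?_, ?_⟩
    · rw [Finset.card_image_of_injOn hsinj]
      omega
    · intro I' hI'ne hI'sub σ
      obtain ⟨θ, hθS, hθ⟩ := hHsh (fun i => jdx (σ (s i)))
      obtain ⟨y, rfl⟩ := (Set.Finite.mem_toFinset hfin).mp hθS
      refine ⟨y, Set.mem_iInter₂.mpr fun t ht => ?_⟩
      have htI : t ∈ H.image (fun i => s i) := hI'sub ht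
      obtain ⟨i, hiH, hit⟩ := Finset.mem_image.mp htI
      have h1 := hpat2 y i _ (hθ i hiH)
      have h2 : s i • y ∈ U (σ (s i)) := hKsubU _ h1.2
      show t • y ∈ U (σ t)
      rw [← hit]
      exact h2
  · -- derive a contradiction with the covering number
    exfalso
    have hdim : ∀ H ⊆ Finset.range nn, Shat S H → H.card < mm := by
      intro H h1 h2
      by_contra h3
      push_neg at h3
      exact hno ⟨H, h1, h2, h3⟩
    obtain ⟨F, hFcov, hFcard⟩ := comb_core l mm hl2 nn (Finset.range nn) S
      (by rw [Finset.card_range]) hdim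
    have hle : seqCovNum Kf s nn ≤ (F.image (fun τ => (fun i : Fin nn => τ ↑i))).card := by
      apply Nat.sInf_le
      refine ⟨_, rfl, ?_⟩
      rw [Set.eq_univ_iff_forall]
      intro y
      obtain ⟨τ, hτF, hτcov⟩ := hFcov (pat y) ((Set.Finite.mem_toFinset hfin).mpr ⟨y, rfl⟩)
      refine Set.mem_iUnion₂.mpr ⟨_, Finset.mem_image_of_mem _ hτF,
        Set.mem_iInter.mpr fun i => ?_⟩
      intro hmem
      exact hτcov ↑i (Finset.mem_range.mpr i.isLt) (hpat1 y ↑i (τ ↑i) i.isLt hmem)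
    have h3 : (seqCovNum Kf s nn : ℝ) ≤ (BB l mm nn : ℝ) := by
      have h4 : (F.image (fun τ => (fun i : Fin nn => τ ↑i))).card ≤ BB l mm nn :=
        le_trans (Finset.card_image_le) hFcard
      exact_mod_cast le_trans hle h4
    have h5 : (BB l mm nn : ℝ) ≤ C * (Real.exp (δ/2))^nn := hCb nn
    linarith


end
end KLaux

/-- Theorem `P-SE vs IN`: a nondiagonal tuple is a sequence entropy tuple
iff it is an IN-tuple. -/
theorem stmt14 {G : Type*} [Monoid G] {X : Type*} [TopologicalSpace X] [CompactSpace X]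
    [T2Space X] [MulAction G X]
    (hc : ∀ s : G, Continuous fun x : X => s • x)
    (hsurj : ∀ s : G, Function.Surjective fun x : X => s • x)
    {k : ℕ} (hk : 2 ≤ k) (x : Fin k → X) (hx : ∃ i j, x i ≠ x j) :
    IsSeqEntropyTuple G x ↔ IsINTuple G x :=
  ⟨fun hse => KLaux.se_to_in x hx hse, fun hin => KLaux.in_to_se x hx hin⟩
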